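/- arXiv:0905.1436 — 4 statements merged into one kernel-verified Lean document; each statement's English description precedes it below -/
import Mathlib

section
/- Let D ⊆ ℂⁿ be an open set contained in {a ∈ ℂⁿ : aᵢ ≠ aⱼ for i ≠ j}, and let B₁,…,Bₙ : D → M₂(ℂ) be holomorphic 2×2-matrix-valued functions satisfying the Schlesinger equations ∂Bᵢ/∂aⱼ = [Bᵢ,Bⱼ]/(aᵢ−aⱼ) for i ≠ j and ∂Bᵢ/∂aᵢ = −∑_{j≠i} [Bᵢ,Bⱼ]/(aᵢ−aⱼ), and suppose that ∑_{i=1}^n Bᵢ(a) = diag(θ,−θ) for all a ∈ D, where θ ∈ ℂ is a constant. Define b(a) = ∑_{i=1}^n aᵢ·(Bᵢ(a))₁₂, where (M)₁₂ denotes the upper-right entry of a 2×2 matrix M. Then for every j = 1,…,n and every a ∈ D one has ∂b/∂aⱼ(a) = (2θ+1)·(Bⱼ(a))₁₂. -/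
/-! By the product rule, `∂b/∂aⱼ = (Bⱼ)₁₂ + (∑ᵢ aᵢ ∂Bᵢ/∂aⱼ)₁₂`. In the sum the Schlesinger equations
make each weight cancel its denominator, `aᵢ (aᵢ - aⱼ)⁻¹ + aⱼ (aⱼ - aᵢ)⁻¹ = 1`, so
`∑ᵢ aᵢ ∂Bᵢ/∂aⱼ = ∑_{i ≠ j} [Bᵢ, Bⱼ] = [∑ᵢ Bᵢ, Bⱼ] = [diag(θ, -θ), Bⱼ]`,
whose upper-right entry is `2θ (Bⱼ)₁₂`. -/

attribute [local instance] Matrix.normedAddCommGroup Matrix.normedSpace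

open Finset

theorem sum_smul_schlesinger_eq_commutator {𝕜 A ι : Type*} [Field 𝕜] [Ring A] [Module 𝕜 A]
    [Fintype ι] [DecidableEq ι] (a : ι → 𝕜) (X dX : ι → A) (j : ι)
    (ha : ∀ i, i ≠ j → a i ≠ a j)
    (h_off : ∀ i, i ≠ j → dX i = (a i - a j)⁻¹ • (X i * X j - X j * X i))
    (h_diag : dX j = -∑ i ∈ univ.erase j, (a j - a i)⁻¹ • (X j * X i - X i * X j)) :
    ∑ i, a i • dX i = (∑ i, X i) * X j - X j * ∑ i, X i := by
  calc ∑ i, a i • dX i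
      = ∑ i ∈ univ.erase j, (a i • dX i + a j • (a j - a i)⁻¹ • (X i * X j - X j * X i)) := by
        rw [← add_sum_erase _ _ (mem_univ j), h_diag, sum_add_distrib, add_comm, smul_neg,
          smul_sum, ← sum_neg_distrib]
        simp only [← smul_neg, neg_sub]
    _ = ∑ i ∈ univ.erase j, (X i * X j - X j * X i) := by
        refine sum_congr rfl fun i hi => ?_
        have hij := ne_of_mem_erase hi
        have hne : a i - a j ≠ 0 := sub_ne_zero.mpr (ha i hij)
        have hne' : a j - a i ≠ 0 := sub_ne_zero.mpr (ha i hij).symm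
        rw [h_off i hij, smul_smul, smul_smul, ← add_smul]
        convert one_smul 𝕜 _
        field_simp
        ring
    _ = ∑ i, (X i * X j - X j * X i) := sum_erase _ (sub_self _)
    _ = (∑ i, X i) * X j - X j * ∑ i, X i := by rw [sum_sub_distrib, sum_mul, mul_sum]

theorem fderiv_sum_coord_smul_apply_single {𝕜 ι F : Type*} [NontriviallyNormedField 𝕜]
    [Fintype ι] [DecidableEq ι] [NormedAddCommGroup F] [NormedSpace 𝕜 F]
    (Y : ι → (ι → 𝕜) → F) (a : ι → 𝕜) (hY : ∀ i, DifferentiableAt 𝕜 (Y i) a) (j : ι) :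
    fderiv 𝕜 (fun x => ∑ i, x i • Y i x) a (Pi.single j 1) =
      Y j a + ∑ i, a i • fderiv 𝕜 (Y i) a (Pi.single j 1) := by
  have hterm : ∀ i, HasFDerivAt (fun x : ι → 𝕜 => x i • Y i x)
      (a i • fderiv 𝕜 (Y i) a + (ContinuousLinearMap.proj i).smulRight (Y i a)) a :=
    fun i => (hasFDerivAt_apply i a).smul (hY i).hasFDerivAt
  rw [(HasFDerivAt.fun_sum fun i _ => hterm i).fderiv]
  simp [sum_add_distrib, Pi.single_apply, add_comm]

/-- Lemma 1 (Gontsov–Vyugin): for a two-dimensional Schlesinger isomonodromic family with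
`∑ Bᵢ = diag(θ, -θ)`, the function `b(a) = ∑ aᵢ (Bᵢ(a))₁₂` satisfies
`∂b/∂aⱼ = (2θ+1)(Bⱼ(a))₁₂`. -/
theorem schlesinger_upper_right_differential
    (n : ℕ) (D : Set (Fin n → ℂ)) (hD : IsOpen D)
    (hDdist : ∀ a ∈ D, ∀ i j : Fin n, i ≠ j → a i ≠ a j)
    (B : Fin n → (Fin n → ℂ) → Matrix (Fin 2) (Fin 2) ℂ)
    (hBdiff : ∀ i, DifferentiableOn ℂ (B i) D)
    (hSch_off : ∀ i j : Fin n, i ≠ j → ∀ a ∈ D,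
      fderiv ℂ (B i) a (Pi.single j 1) =
        (a i - a j)⁻¹ • (B i a * B j a - B j a * B i a))
    (hSch_diag : ∀ i : Fin n, ∀ a ∈ D,
      fderiv ℂ (B i) a (Pi.single i 1) =
        -∑ j ∈ Finset.univ.erase i,
          (a i - a j)⁻¹ • (B i a * B j a - B j a * B i a))
    (θ : ℂ)
    (hsum : ∀ a ∈ D, ∑ i, B i a = Matrix.diagonal ![θ, -θ])
    (b : (Fin n → ℂ) → ℂ)
    (hb : ∀ a, b a = ∑ i, a i * B i a 0 1) :
    ∀ j : Fin n, ∀ a ∈ D,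
      fderiv ℂ b a (Pi.single j 1) = (2 * θ + 1) * B j a 0 1 := by
  intro j a ha
  have hB : ∀ i, DifferentiableAt ℂ (B i) a :=
    fun i => (hBdiff i).differentiableAt (hD.mem_nhds ha)
  let entry : Matrix (Fin 2) (Fin 2) ℂ →L[ℂ] ℂ :=
    (Matrix.entryLinearMap ℂ ℂ 0 1).toContinuousLinearMap
  have hb_comp : b = entry ∘ fun x => ∑ i, x i • B i x :=
    funext fun x => by simp [hb, entry]
  have hcomm := sum_smul_schlesinger_eq_commutator a (B · a)
    (fun i => fderiv ℂ (B i) a (Pi.single j 1)) j (fun i hij => hDdist a ha i j hij)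
    (fun i hij => hSch_off i j hij a ha) (hSch_diag j a ha)
  have hdiff : DifferentiableAt ℂ (fun x => ∑ i, x i • B i x) a := by fun_prop
  calc fderiv ℂ b a (Pi.single j 1)
      = entry (fderiv ℂ (fun x => ∑ i, x i • B i x) a (Pi.single j 1)) := by
        rw [hb_comp, (entry.hasFDerivAt.comp a hdiff.hasFDerivAt).fderiv]
        rfl
    _ = entry (B j a + ∑ i, a i • fderiv ℂ (B i) a (Pi.single j 1)) :=
        congrArg entry (fderiv_sum_coord_smul_apply_single B a hB j)
    _ = entry (B j a +
          (Matrix.diagonal ![θ, -θ] * B j a - B j a * Matrix.diagonal ![θ, -θ])) := by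
        rw [hcomm, hsum a ha]
    _ = (2 * θ + 1) * B j a 0 1 := by
        simp only [entry, LinearMap.coe_toContinuousLinearMap', Matrix.entryLinearMap_apply,
          Matrix.add_apply, Matrix.sub_apply, Matrix.diagonal_mul, Matrix.mul_diagonal,
          Matrix.cons_val_zero, Matrix.cons_val_one, Matrix.cons_val_fin_one]
        ring
end

section
/- Fix n ≥ 1 and set a_{n+1} = 0, a_{n+2} = 1. Let D ⊆ (ℂ∖{0,1})ⁿ be an open set contained in {a : aᵢ ≠ aⱼ for i ≠ j}, and let B₁,…,B_{n+2} : D → M₂(ℂ) be holomorphic 2×2-matrix-valued functions of a = (a₁,…,aₙ) satisfying the Schlesinger equations with two fixed points: ∂Bᵢ/∂aⱼ = [Bᵢ,Bⱼ]/(aᵢ−aⱼ) for all i ∈ {1,…,n+2}, j ∈ {1,…,n} with i ≠ j, and ∂Bⱼ/∂aⱼ = −∑_{l=1,…,n+2, l≠j} [Bⱼ,B_l]/(aⱼ−a_l) for j ∈ {1,…,n}. Suppose ∑_{i=1}^{n+2} Bᵢ(a) = diag(θ,−θ) for all a ∈ D, where θ ∈ ℂ is a constant. Define b(a) = ∑_{i=1}^{n+2}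 aᵢ·(Bᵢ(a))₁₂ = ∑_{i=1}^{n} aᵢ·(Bᵢ(a))₁₂ + (B_{n+2}(a))₁₂. Then for every j = 1,…,n and a ∈ D one has ∂b/∂aⱼ(a) = (2θ+1)·(Bⱼ(a))₁₂. -/
/-!
Write `eᵢ` for the singular points and `Ḃᵢ` for `∂Bᵢ/∂aⱼ`. Differentiating `b = ∑ eᵢ (Bᵢ)₁₂`
gives `(Bⱼ)₁₂ + (∑ eᵢ Ḃᵢ)₁₂`, since only `eⱼ = aⱼ` moves. In `∑ eᵢ Ḃᵢ` the Schlesinger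
equations pair the term of `i ≠ j` with the `i`-th summand of `aⱼ Ḃⱼ`, and the pair collapses
to `(eᵢ - aⱼ)/(eᵢ - aⱼ) [Bᵢ, Bⱼ] = [Bᵢ, Bⱼ]`. Summing gives `[∑ Bᵢ, Bⱼ] = [diag(θ, -θ), Bⱼ]`,
whose `(1,2)` entry is `2θ (Bⱼ)₁₂`.
-/

attribute [local instance] Matrix.normedAddCommGroup Matrix.normedSpace

/-- The `n+2` singular points: the moving points `a₁, …, aₙ` together with the
fixed points `a_{n+1} = 0` and `a_{n+2} = 1`. -/
noncomputable def extPts (n : ℕ) (a : Fin n → ℂ) : Fin (n + 2) → ℂ :=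
  fun i => if h : (i : ℕ) < n then a ⟨i, h⟩ else if (i : ℕ) = n then 0 else 1

open Finset

theorem diagonal_mul_sub_mul_diagonal_apply {R n : Type*} [CommRing R] [Fintype n]
    [DecidableEq n] (d : n → R) (M : Matrix n n R) (i j : n) :
    (Matrix.diagonal d * M - M * Matrix.diagonal d) i j = (d i - d j) * M i j := by
  rw [Matrix.sub_apply, Matrix.diagonal_mul, Matrix.mul_diagonal]
  ring

theorem sum_smul_eq_commutator_of_schlesinger {K A ι : Type*} [Field K] [Ring A] [Module K A]
    [Fintype ι] [DecidableEq ι] {e : ι → K} {B D : ι → A} {J : ι}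
    (he : ∀ i ≠ J, e i ≠ e J)
    (hoff : ∀ i ≠ J, D i = (e i - e J)⁻¹ • (B i * B J - B J * B i))
    (hdiag : D J = -∑ l ∈ univ.erase J, (e J - e l)⁻¹ • (B J * B l - B l * B J)) :
    ∑ i, e i • D i = (∑ i, B i) * B J - B J * ∑ i, B i := by
  have hpair : ∀ i ∈ univ.erase J,
      e i • D i - e J • ((e J - e i)⁻¹ • (B J * B i - B i * B J)) = B i * B J - B J * B i := by
    intro i hi
    have hne : e i ≠ e J := he i (ne_of_mem_erase hi)
    have hcoef : e i * (e i - e J)⁻¹ + e J * (e J - e i)⁻¹ = 1 := by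
      field_simp [sub_ne_zero.2 hne, sub_ne_zero.2 hne.symm]
      ring
    rw [hoff i (ne_of_mem_erase hi), ← neg_sub (B i * B J), smul_neg, smul_neg, sub_neg_eq_add,
      smul_smul, smul_smul, ← add_smul, hcoef, one_smul]
  rw [← sum_erase_add _ _ (mem_univ J), hdiag, smul_neg, smul_sum, ← sub_eq_add_neg,
    ← sum_sub_distrib, sum_congr rfl hpair,
    sum_erase univ (f := fun i => B i * B J - B J * B i) (sub_self _),
    sum_sub_distrib, sum_mul, mul_sum]

theorem fderiv_matrix_apply_apply {𝕜 E m n : Type*} [NontriviallyNormedField 𝕜]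
    [NormedAddCommGroup E] [NormedSpace 𝕜 E] [Fintype m] [Fintype n]
    {M : E → Matrix m n 𝕜} {x : E} (hM : DifferentiableAt 𝕜 M x) (i : m) (j : n) (v : E) :
    fderiv 𝕜 (fun y => M y i j) x v = fderiv 𝕜 M x v i j := by
  rw [fderiv_apply (differentiableAt_pi.1 hM i) j, fderiv_apply hM i]
  rfl

theorem fderiv_sum_mul_matrix_apply_apply {𝕜 E ι m n : Type*} [NontriviallyNormedField 𝕜]
    [NormedAddCommGroup E] [NormedSpace 𝕜 E] [Fintype ι] [Fintype m] [Fintype n]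
    {c : ι → E → 𝕜} {M : ι → E → Matrix m n 𝕜} {x : E}
    (hc : ∀ k, DifferentiableAt 𝕜 (c k) x) (hM : ∀ k, DifferentiableAt 𝕜 (M k) x)
    (i : m) (j : n) (v : E) :
    fderiv 𝕜 (fun y => ∑ k, c k y * M k y i j) x v =
      ∑ k, (c k x * fderiv 𝕜 (M k) x v i j + M k x i j * fderiv 𝕜 (c k) x v) := by
  have hMij : ∀ k, DifferentiableAt 𝕜 (fun y => M k y i j) x := fun k =>
    differentiableAt_pi.1 (differentiableAt_pi.1 (hM k) i) j
  rw [fderiv_fun_sum (A := fun k y => c k y * M k y i j) fun k _ => (hc k).mul (hMij k),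
    _root_.sum_apply]
  refine sum_congr rfl fun k _ => ?_
  rw [fderiv_fun_mul (hc k) (hMij k), add_apply, smul_apply, smul_apply,
    fderiv_matrix_apply_apply (hM k), smul_eq_mul, smul_eq_mul]

theorem extPts_castAdd (n : ℕ) (a : Fin n → ℂ) (j : Fin n) :
    extPts n a (Fin.castAdd 2 j) = a j := by
  simp [extPts]

theorem extPts_natAdd (n : ℕ) (a : Fin n → ℂ) (k : Fin 2) :
    extPts n a (Fin.natAdd n k) = ![0, 1] k := by
  fin_cases k <;> simp [extPts]

theorem differentiable_extPts_apply (n : ℕ) (i : Fin (n + 2)) :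
    Differentiable ℂ (fun x => extPts n x i) := by
  unfold extPts
  split_ifs <;> fun_prop

theorem fderiv_extPts_apply_single (n : ℕ) (a : Fin n → ℂ) (i : Fin (n + 2)) (j : Fin n) :
    fderiv ℂ (fun x => extPts n x i) a (Pi.single j 1) =
      (Pi.single (Fin.castAdd 2 j) 1 : Fin (n + 2) → ℂ) i := by
  induction i using Fin.addCases with
  | left k =>
    simp only [extPts_castAdd]
    rw [fderiv_apply differentiableAt_id k]
    simp [Pi.single_apply]
  | right k =>
    have hne : Fin.natAdd n k ≠ Fin.castAdd 2 j := fun h => by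
      have := congrArg Fin.val h
      simp at this
      omega
    simp [extPts_natAdd, Pi.single_eq_of_ne hne]

theorem schlesinger_upper_right_differential_fixed_points_general
    (n : ℕ) (D : Set (Fin n → ℂ)) (hD : IsOpen D)
    (hDdist : ∀ a ∈ D, ∀ i j : Fin (n + 2), i ≠ j → extPts n a i ≠ extPts n a j)
    (B : Fin (n + 2) → (Fin n → ℂ) → Matrix (Fin 2) (Fin 2) ℂ)
    (hBdiff : ∀ i, DifferentiableOn ℂ (B i) D)
    (hSch_off : ∀ (i : Fin (n + 2)) (j : Fin n), i ≠ Fin.castAdd 2 j → ∀ a ∈ D,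
      fderiv ℂ (B i) a (Pi.single j 1) =
        (extPts n a i - a j)⁻¹ •
          (B i a * B (Fin.castAdd 2 j) a - B (Fin.castAdd 2 j) a * B i a))
    (hSch_diag : ∀ j : Fin n, ∀ a ∈ D,
      fderiv ℂ (B (Fin.castAdd 2 j)) a (Pi.single j 1) =
        -∑ l ∈ Finset.univ.erase (Fin.castAdd 2 j),
          (a j - extPts n a l)⁻¹ •
            (B (Fin.castAdd 2 j) a * B l a - B l a * B (Fin.castAdd 2 j) a))
    (θ : ℂ)
    (hsum : ∀ a ∈ D, ∑ i, B i a = Matrix.diagonal ![θ, -θ])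
    (b : (Fin n → ℂ) → ℂ)
    (hb : ∀ a, b a = ∑ i, extPts n a i * B i a 0 1) :
    ∀ j : Fin n, ∀ a ∈ D,
      fderiv ℂ b a (Pi.single j 1) = (2 * θ + 1) * B (Fin.castAdd 2 j) a 0 1 := by
  intro j a ha
  have hmoving : ∑ i, B i a 0 1 * fderiv ℂ (fun x => extPts n x i) a (Pi.single j 1) =
      B (Fin.castAdd 2 j) a 0 1 := by
    simp only [fderiv_extPts_apply_single, Pi.single_apply, mul_ite, mul_one, mul_zero,
      sum_ite_eq', mem_univ, if_true]
  have hentry : ∑ i, extPts n a i * fderiv ℂ (B i) a (Pi.single j 1) 0 1 =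
      (∑ i, extPts n a i • fderiv ℂ (B i) a (Pi.single j 1)) 0 1 := by
    simp only [Matrix.sum_apply, Matrix.smul_apply, smul_eq_mul]
  have hcomm : ∑ i, extPts n a i • fderiv ℂ (B i) a (Pi.single j 1) =
      (∑ i, B i a) * B (Fin.castAdd 2 j) a - B (Fin.castAdd 2 j) a * ∑ i, B i a :=
    sum_smul_eq_commutator_of_schlesinger (fun i hi => hDdist a ha i _ hi)
      (fun i hi => by rw [hSch_off i j hi a ha, extPts_castAdd])
      (by rw [hSch_diag j a ha, extPts_castAdd])
  rw [funext hb, fderiv_sum_mul_matrix_apply_apply (fun i => differentiable_extPts_apply n i a)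
      (fun i => (hBdiff i).differentiableAt (hD.mem_nhds ha)),
    sum_add_distrib, hmoving, hentry, hcomm, hsum a ha, diagonal_mul_sub_mul_diagonal_apply]
  simp only [Matrix.cons_val_zero, Matrix.cons_val_one]
  ring

/-- Lemma 1 for Garnier-type isomonodromic families: with the two fixed singular points
`0` and `1`, if `∑_{i=1}^{n+2} Bᵢ = diag(θ,-θ)`, then the function
`b(a) = ∑ᵢ aᵢ (Bᵢ(a))₁₂` satisfies `∂b/∂aⱼ = (2θ+1)(Bⱼ(a))₁₂`. -/
theorem schlesinger_upper_right_differential_fixed_points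
    (n : ℕ) (hn : 1 ≤ n) (D : Set (Fin n → ℂ)) (hD : IsOpen D)
    (hD01 : ∀ a ∈ D, ∀ i : Fin n, a i ≠ 0 ∧ a i ≠ 1)
    (hDdist : ∀ a ∈ D, ∀ i j : Fin (n + 2), i ≠ j → extPts n a i ≠ extPts n a j)
    (B : Fin (n + 2) → (Fin n → ℂ) → Matrix (Fin 2) (Fin 2) ℂ)
    (hBdiff : ∀ i, DifferentiableOn ℂ (B i) D)
    (hSch_off : ∀ (i : Fin (n + 2)) (j : Fin n), i ≠ Fin.castAdd 2 j → ∀ a ∈ D,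
      fderiv ℂ (B i) a (Pi.single j 1) =
        (extPts n a i - a j)⁻¹ •
          (B i a * B (Fin.castAdd 2 j) a - B (Fin.castAdd 2 j) a * B i a))
    (hSch_diag : ∀ j : Fin n, ∀ a ∈ D,
      fderiv ℂ (B (Fin.castAdd 2 j)) a (Pi.single j 1) =
        -∑ l ∈ Finset.univ.erase (Fin.castAdd 2 j),
          (a j - extPts n a l)⁻¹ •
            (B (Fin.castAdd 2 j) a * B l a - B l a * B (Fin.castAdd 2 j) a))
    (θ : ℂ)
    (hsum : ∀ a ∈ D, ∑ i, B i a = Matrix.diagonal ![θ, -θ])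
    (b : (Fin n → ℂ) → ℂ)
    (hb : ∀ a, b a = ∑ i, extPts n a i * B i a 0 1) :
    ∀ j : Fin n, ∀ a ∈ D,
      fderiv ℂ b a (Pi.single j 1) = (2 * θ + 1) * B (Fin.castAdd 2 j) a 0 1 :=
  schlesinger_upper_right_differential_fixed_points_general n D hD hDdist B hBdiff hSch_off
    hSch_diag θ hsum b hb
end

section
/- Let D ⊆ ℂ∖{0,1} be an open set and let B₁, B₂, B₃ : D → M₂(ℂ) be holomorphic 2×2-matrix-valued functions of t satisfying the Schlesinger equations dB₁/dt = −[B₁,B₂]/t − [B₁,B₃]/(t−1), dB₂/dt = [B₁,B₂]/t, dB₃/dt = [B₁,B₃]/(t−1), with B₁(t)+B₂(t)+B₃(t) = diag(θ,−θ) for a constant θ ∈ ℂ satisfying 2θ+1 ≠ 0. Write b_k(t) = (B_k(t))₁₂ and let g(t) = t·b₁(t) + b₃(t). Suppose t₀ ∈ D is a point with g(t₀) = 0 and (b₁(t₀), b₂(t₀), b₃(t₀)) ≠ (0,0,0). Then g'(t₀) ≠ 0, i.e. t₀ is a simple zero of g; consequently the function u(t) = −t·b₂(t)/g(t) has at most a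 simple pole at t₀, i.e. (t−t₀)·u(t) extends holomorphically to t₀. -/
/-!
Along the Schlesinger flow, `d/dt (t B₁ + B₃) = B₁ - [B₁, B₂] - [B₁, B₃] = B₁ - [B₁, B₁ + B₂ + B₃]`,
and for `B₁ + B₂ + B₃ = diag(θ, -θ)` the upper-right entry of this is `(2θ + 1) b₁`; so `g' = (2θ + 1) b₁`.
At a zero of `g`, `b₁ = 0` would force `b₃ = -t b₁ = 0` and then `b₂ = -b₁ - b₃ = 0`, so `g'(t₀) ≠ 0`.
Then `g(t) = (t - t₀) k(t)` with `k = dslope g t₀` analytic and `k(t₀) = g'(t₀) ≠ 0`, and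
`(t - t₀) u(t) = -t b₂(t) / k(t)` near `t₀`.
-/

open scoped Topology

attribute [local instance] Matrix.normedAddCommGroup Matrix.normedSpace

theorem Matrix.commutator_diagonal_apply {n R : Type*} [Fintype n] [DecidableEq n] [CommRing R]
    (X : Matrix n n R) (d : n → R) (i j : n) :
    (X * Matrix.diagonal d - Matrix.diagonal d * X) i j = (d j - d i) * X i j := by
  simp only [Matrix.sub_apply, Matrix.mul_diagonal, Matrix.diagonal_mul]
  ring

theorem HasDerivAt.matrix_apply {𝕜 m n : Type*} [NontriviallyNormedField 𝕜] [Fintype m]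
    [Fintype n] {B : 𝕜 → Matrix m n 𝕜} {B' : Matrix m n 𝕜} {t : 𝕜} (hB : HasDerivAt B B' t)
    (i : m) (j : n) : HasDerivAt (fun s => B s i j) (B' i j) t :=
  hasDerivAt_pi.1 (hasDerivAt_pi.1 hB i) j

theorem DifferentiableOn.matrix_apply {𝕜 m n : Type*} [NontriviallyNormedField 𝕜] [Fintype m]
    [Fintype n] {B : 𝕜 → Matrix m n 𝕜} {s : Set 𝕜} (hB : DifferentiableOn 𝕜 B s)
    (i : m) (j : n) : DifferentiableOn 𝕜 (fun t => B t i j) s :=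
  differentiableOn_pi.1 (differentiableOn_pi.1 hB i) j

theorem smul_schlesinger_add {K M : Type*} [Field K] [AddCommGroup M] [Module K M] {t : K}
    (ht0 : t ≠ 0) (ht1 : t ≠ 1) (X Y : M) :
    t • (-(t⁻¹ • X) - (t - 1)⁻¹ • Y) + (t - 1)⁻¹ • Y = -(X + Y) := by
  have ht1' : t - 1 ≠ 0 := sub_ne_zero.2 ht1
  have hcoef : t * (t - 1)⁻¹ = 1 + (t - 1)⁻¹ := by field_simp; ring
  rw [smul_sub, smul_neg, smul_smul, mul_inv_cancel₀ ht0, one_smul, smul_smul, hcoef, add_smul,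
    one_smul]
  abel

theorem exists_analyticAt_eq_sub_mul_div_of_deriv_ne_zero {𝕜 : Type*} [NontriviallyNormedField 𝕜]
    {f g : 𝕜 → 𝕜} {z : 𝕜} (hf : AnalyticAt 𝕜 f z) (hg : AnalyticAt 𝕜 g z) (hgz : g z = 0)
    (hg' : deriv g z ≠ 0) :
    ∃ h : 𝕜 → 𝕜, AnalyticAt 𝕜 h z ∧ ∀ᶠ t in 𝓝[≠] z, h t = (t - z) * (f t / g t) := by
  obtain ⟨p, hp⟩ := hg
  have hk : AnalyticAt 𝕜 (dslope g z) z := hp.has_fpower_series_dslope_fslope.analyticAt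
  have hkz : dslope g z z ≠ 0 := by rwa [dslope_same]
  refine ⟨fun t => f t / dslope g z t, hf.div hk hkz, ?_⟩
  filter_upwards [self_mem_nhdsWithin] with t ht
  have hgt : g t = (t - z) * dslope g z t := by
    simpa [hgz, smul_eq_mul] using (sub_smul_dslope g z t).symm
  rw [hgt, mul_div_assoc', mul_div_mul_left _ _ (sub_ne_zero.2 ht)]

section Schlesinger

variable {𝕜 n : Type*} [NontriviallyNormedField 𝕜] [Fintype n] [DecidableEq n]
  {B1 B2 B3 : 𝕜 → Matrix n n 𝕜} {t : 𝕜}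

theorem hasDerivAt_smul_add_of_schlesinger (ht0 : t ≠ 0) (ht1 : t ≠ 1)
    (h1 : HasDerivAt B1
      (-(t⁻¹ • (B1 t * B2 t - B2 t * B1 t)) - (t - 1)⁻¹ • (B1 t * B3 t - B3 t * B1 t)) t)
    (h3 : HasDerivAt B3 ((t - 1)⁻¹ • (B1 t * B3 t - B3 t * B1 t)) t) :
    HasDerivAt (fun s => s • B1 s + B3 s)
      (B1 t - (B1 t * (B1 t + B2 t + B3 t) - (B1 t + B2 t + B3 t) * B1 t)) t := by
  refine (((hasDerivAt_id t).smul h1).add h3).congr_deriv ?_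
  rw [id_eq, one_smul, add_right_comm, smul_schlesinger_add ht0 ht1]
  noncomm_ring

theorem hasDerivAt_entry_of_schlesinger (ht0 : t ≠ 0) (ht1 : t ≠ 1)
    (h1 : HasDerivAt B1
      (-(t⁻¹ • (B1 t * B2 t - B2 t * B1 t)) - (t - 1)⁻¹ • (B1 t * B3 t - B3 t * B1 t)) t)
    (h3 : HasDerivAt B3 ((t - 1)⁻¹ • (B1 t * B3 t - B3 t * B1 t)) t)
    {d : n → 𝕜} (hsum : B1 t + B2 t + B3 t = Matrix.diagonal d) (i j : n) :
    HasDerivAt (fun s => s * B1 s i j + B3 s i j) ((1 + d i - d j) * B1 t i j) t := by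
  have h := (hasDerivAt_smul_add_of_schlesinger ht0 ht1 h1 h3).matrix_apply i j
  rw [hsum, Matrix.sub_apply, Matrix.commutator_diagonal_apply] at h
  exact h.congr_deriv (by ring)

end Schlesinger

theorem zero_of_g_is_simple_general
    (D : Set ℂ) (hD : IsOpen D) (hD01 : ∀ t ∈ D, t ≠ 0 ∧ t ≠ 1)
    (B1 B2 B3 : ℂ → Matrix (Fin 2) (Fin 2) ℂ)
    (hB1 : DifferentiableOn ℂ B1 D) (hB2 : DifferentiableOn ℂ B2 D)
    (hB3 : DifferentiableOn ℂ B3 D)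
    (hS1 : ∀ t ∈ D, deriv B1 t =
      -(t⁻¹ • (B1 t * B2 t - B2 t * B1 t)) - (t - 1)⁻¹ • (B1 t * B3 t - B3 t * B1 t))
    (hS3 : ∀ t ∈ D, deriv B3 t = (t - 1)⁻¹ • (B1 t * B3 t - B3 t * B1 t))
    (θ : ℂ) (hθ : 2 * θ + 1 ≠ 0)
    (hsum : ∀ t ∈ D, B1 t + B2 t + B3 t = Matrix.diagonal ![θ, -θ])
    (b1 b2 b3 g : ℂ → ℂ)
    (hb1 : ∀ t, b1 t = B1 t 0 1) (hb2 : ∀ t, b2 t = B2 t 0 1)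
    (hb3 : ∀ t, b3 t = B3 t 0 1)
    (hg : ∀ t, g t = t * b1 t + b3 t)
    (t0 : ℂ) (ht0 : t0 ∈ D) (hg0 : g t0 = 0)
    (hnz : ¬(b1 t0 = 0 ∧ b2 t0 = 0 ∧ b3 t0 = 0)) :
    deriv g t0 ≠ 0 ∧
      ∃ h : ℂ → ℂ, AnalyticAt ℂ h t0 ∧
        ∀ᶠ t in 𝓝[≠] t0, h t = (t - t0) * (-(t * b2 t) / g t) := by
  obtain rfl : b1 = fun t => B1 t 0 1 := funext hb1
  obtain rfl : b2 = fun t => B2 t 0 1 := funext hb2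
  obtain rfl : b3 = fun t => B3 t 0 1 := funext hb3
  obtain rfl : g = fun t => t * B1 t 0 1 + B3 t 0 1 := funext hg
  obtain ⟨ht0_ne_zero, ht0_ne_one⟩ := hD01 t0 ht0
  have hDt0 : D ∈ 𝓝 t0 := hD.mem_nhds ht0
  have hderiv : deriv (fun t => t * B1 t 0 1 + B3 t 0 1) t0 = (2 * θ + 1) * B1 t0 0 1 := by
    have h := hasDerivAt_entry_of_schlesinger ht0_ne_zero ht0_ne_one
      (hS1 t0 ht0 ▸ (hB1.differentiableAt hDt0).hasDerivAt)
      (hS3 t0 ht0 ▸ (hB3.differentiableAt hDt0).hasDerivAt) (hsum t0 ht0) 0 1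
    rw [h.deriv, Matrix.cons_val_zero, Matrix.cons_val_one, Matrix.cons_val_zero]
    ring
  have hb1_ne : B1 t0 0 1 ≠ 0 := by
    have hoff : B1 t0 0 1 + B2 t0 0 1 + B3 t0 0 1 = 0 := by
      simpa using congrFun (congrFun (hsum t0 ht0) 0) 1
    intro h1
    have h3 : B3 t0 0 1 = 0 := by linear_combination hg0 - t0 * h1
    exact hnz ⟨h1, by linear_combination hoff - h1 - h3, h3⟩
  have hderiv_ne : deriv (fun t => t * B1 t 0 1 + B3 t 0 1) t0 ≠ 0 :=
    hderiv ▸ mul_ne_zero hθ hb1_ne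
  have hg_an := ((differentiableOn_id.mul (hB1.matrix_apply 0 1)).add
    (hB3.matrix_apply 0 1)).analyticAt hDt0
  have hf_an := (analyticAt_id.mul ((hB2.matrix_apply 0 1).analyticAt hDt0)).neg
  exact ⟨hderiv_ne, exists_analyticAt_eq_sub_mul_div_of_deriv_ne_zero hf_an hg_an hg0 hderiv_ne⟩

/-- Simplicity of movable poles of Painlevé VI solutions in the case `α ≠ 0`:
a zero `t₀` of `g(t) = t b₁(t) + b₃(t)` at which not all `bᵢ` vanish is simple, so
`u(t) = -t b₂(t)/g(t)` has at most a simple pole at `t₀`. -/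
theorem zero_of_g_is_simple
    (D : Set ℂ) (hD : IsOpen D) (hD01 : ∀ t ∈ D, t ≠ 0 ∧ t ≠ 1)
    (B1 B2 B3 : ℂ → Matrix (Fin 2) (Fin 2) ℂ)
    (hB1 : DifferentiableOn ℂ B1 D) (hB2 : DifferentiableOn ℂ B2 D)
    (hB3 : DifferentiableOn ℂ B3 D)
    (hS1 : ∀ t ∈ D, deriv B1 t =
      -(t⁻¹ • (B1 t * B2 t - B2 t * B1 t)) - (t - 1)⁻¹ • (B1 t * B3 t - B3 t * B1 t))
    (hS2 : ∀ t ∈ D, deriv B2 t = t⁻¹ • (B1 t * B2 t - B2 t * B1 t))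
    (hS3 : ∀ t ∈ D, deriv B3 t = (t - 1)⁻¹ • (B1 t * B3 t - B3 t * B1 t))
    (θ : ℂ) (hθ : 2 * θ + 1 ≠ 0)
    (hsum : ∀ t ∈ D, B1 t + B2 t + B3 t = Matrix.diagonal ![θ, -θ])
    (b1 b2 b3 g : ℂ → ℂ)
    (hb1 : ∀ t, b1 t = B1 t 0 1) (hb2 : ∀ t, b2 t = B2 t 0 1)
    (hb3 : ∀ t, b3 t = B3 t 0 1)
    (hg : ∀ t, g t = t * b1 t + b3 t)
    (t0 : ℂ) (ht0 : t0 ∈ D) (hg0 : g t0 = 0)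
    (hnz : ¬(b1 t0 = 0 ∧ b2 t0 = 0 ∧ b3 t0 = 0)) :
    deriv g t0 ≠ 0 ∧
      ∃ h : ℂ → ℂ, AnalyticAt ℂ h t0 ∧
        ∀ᶠ t in 𝓝[≠] t0, h t = (t - t0) * (-(t * b2 t) / g t) :=
  zero_of_g_is_simple_general D hD hD01 B1 B2 B3 hB1 hB2 hB3 hS1 hS3 θ hθ hsum b1 b2 b3 g hb1 hb2
    hb3 hg t0 ht0 hg0 hnz
end

section
/- Let n ≥ 0, let a₁,…,a_{n+2} ∈ ℂ and b₁,…,b_{n+2} ∈ ℂ with ∑_{i=1}^{n+2} bᵢ = 0, and define the polynomial P(z) = ∑_{i=1}^{n+2} bᵢ·∏_{j≠i}(z−aⱼ). Then P has degree at most n (the coefficient of z^{n+1} vanishes), and for every k = 0,1,…,n the coefficient of z^{n−k} in P equals (−1)^k · ∑_{S} (∑_{i∈S} bᵢ)·(∏_{i∈S} aᵢ), where the sum is over all subsets S ⊆ {1,…,n+2} of cardinality k+1. In particular the coefficient of zⁿ equals ∑_{i=1}^{n+2} bᵢaᵢ. -/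
/-!
By Vieta, the coefficient of `z^(n-k)` in the monic polynomial `∏_{j ≠ i} (z - aⱼ)` of degree
`n + 1` is `(-1)^(k+1)` times the elementary symmetric sum of degree `k + 1` of the `aⱼ` with
`j ≠ i`. Weighting by `bᵢ` and exchanging the two sums, each `(k+1)`-subset `S` picks up the
weight `∑_{i ∉ S} bᵢ`, which equals `-∑_{i ∈ S} bᵢ` because the `bᵢ` sum to zero. For `k = -1`
the same computation gives `∑ bᵢ = 0` as the coefficient of `z^(n+1)`.
-/

open Polynomial Finset

section

variable {ι R : Type*}

theorem Finset.prod_X_sub_C_coeff [CommRing R] (s : Finset ι) (r : ι → R) {m : ℕ} (h : m ≤ #s) :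
    (∏ i ∈ s, (X - C (r i))).coeff m =
      (-1) ^ (#s - m) * ∑ t ∈ s.powersetCard (#s - m), ∏ i ∈ t, r i := by
  simp_rw [sub_eq_add_neg, ← C_neg, Finset.prod_X_add_C_coeff _ _ h, mul_sum]
  refine sum_congr rfl fun t ht => ?_
  rw [← (mem_powersetCard.mp ht).2, ← prod_const, ← prod_mul_distrib]
  simp

theorem Finset.sum_mul_sum_powersetCard_erase [DecidableEq ι] [CommSemiring R] (s : Finset ι)
    (k : ℕ) (b : ι → R) (f : Finset ι → R) :
    ∑ i ∈ s, b i * ∑ t ∈ (s.erase i).powersetCard k, f t =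
      ∑ t ∈ s.powersetCard k, (∑ i ∈ s \ t, b i) * f t := by
  simp_rw [mul_sum, sum_mul]
  exact sum_comm' fun i t => by
    simp only [mem_powersetCard, subset_erase, mem_sdiff]
    tauto

variable [DecidableEq ι] [CommRing R] (s : Finset ι) (a b : ι → R)

theorem natDegree_sum_C_mul_prod_erase_X_sub_C_le :
    (∑ i ∈ s, C (b i) * ∏ j ∈ s.erase i, (X - C (a j))).natDegree ≤ #s - 1 :=
  natDegree_sum_le_of_forall_le _ _ fun i hi =>
    (natDegree_C_mul_le _ _).trans <| (natDegree_prod_le _ _).trans <| by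
      simpa [card_erase_of_mem hi] using sum_le_sum fun j (_ : j ∈ s.erase i) =>
        natDegree_X_sub_C_le (a j)

theorem coeff_sum_C_mul_prod_erase_X_sub_C {m k : ℕ} (h : m + k + 1 = #s) :
    (∑ i ∈ s, C (b i) * ∏ j ∈ s.erase i, (X - C (a j))).coeff m =
      (-1) ^ k * ∑ t ∈ s.powersetCard k, (∑ i ∈ s \ t, b i) * ∏ i ∈ t, a i := by
  have hcoeff : ∀ i ∈ s, (∏ j ∈ s.erase i, (X - C (a j))).coeff m =
      (-1) ^ k * ∑ t ∈ (s.erase i).powersetCard k, ∏ j ∈ t, a j := fun i hi => by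
    have hcard : #(s.erase i) = m + k := by rw [card_erase_of_mem hi]; omega
    rw [Finset.prod_X_sub_C_coeff _ _ (by omega), hcard, Nat.add_sub_cancel_left]
  simp_rw [finsetSum_coeff, coeff_C_mul]
  rw [sum_congr rfl fun i hi => by rw [hcoeff i hi, mul_left_comm], ← mul_sum,
    sum_mul_sum_powersetCard_erase]

theorem coeff_sum_C_mul_prod_erase_X_sub_C_of_sum_eq_zero (hb : ∑ i ∈ s, b i = 0) {m k : ℕ}
    (h : m + k + 2 = #s) :
    (∑ i ∈ s, C (b i) * ∏ j ∈ s.erase i, (X - C (a j))).coeff m =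
      (-1) ^ k * ∑ t ∈ s.powersetCard (k + 1), (∑ i ∈ t, b i) * ∏ i ∈ t, a i := by
  rw [coeff_sum_C_mul_prod_erase_X_sub_C s a b (by omega : m + (k + 1) + 1 = #s), pow_succ,
    mul_assoc, neg_one_mul, ← sum_neg_distrib]
  refine congrArg _ (sum_congr rfl fun t ht => ?_)
  have hsplit := sum_sdiff (f := b) (mem_powersetCard.mp ht).1
  rw [hb] at hsplit
  rw [eq_neg_of_add_eq_zero_left hsplit, neg_mul, neg_neg]

end

/-- Coefficients of the polynomial `P(z) = ∑ᵢ bᵢ ∏_{j≠i} (z - aⱼ)` with `∑ bᵢ = 0`: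
the leading coefficient vanishes, and the coefficient of `z^{n-k}` equals
`(-1)^k ∑_{|S| = k+1} (∑_{i∈S} bᵢ)(∏_{i∈S} aᵢ)`. -/
theorem coefficients_of_upper_right_polynomial
    (n : ℕ) (a b : Fin (n + 2) → ℂ) (hb : ∑ i, b i = 0)
    (P : ℂ[X])
    (hP : P = ∑ i, C (b i) * ∏ j ∈ Finset.univ.erase i, (X - C (a j))) :
    P.coeff (n + 1) = 0 ∧ P.degree ≤ n ∧
      (∀ k : ℕ, k ≤ n →
        P.coeff (n - k) =
          (-1 : ℂ) ^ k *
            ∑ S ∈ Finset.powersetCard (k + 1) (Finset.univ : Finset (Fin (n + 2))),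
              (∑ i ∈ S, b i) * ∏ i ∈ S, a i) ∧
      P.coeff n = ∑ i, b i * a i := by
  have hcard : #(univ : Finset (Fin (n + 2))) = n + 2 := card_fin _
  have htop : P.coeff (n + 1) = 0 := by
    simpa [hP, hb] using
      coeff_sum_C_mul_prod_erase_X_sub_C univ a b (m := n + 1) (k := 0) (by omega)
  have hcoeff : ∀ k ≤ n, P.coeff (n - k) = (-1) ^ k *
      ∑ S ∈ powersetCard (k + 1) univ, (∑ i ∈ S, b i) * ∏ i ∈ S, a i := fun k hk =>
    hP ▸ coeff_sum_C_mul_prod_erase_X_sub_C_of_sum_eq_zero univ a b hb (by omega)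
  have hdeg : P.natDegree ≤ n + 1 := by
    simpa [hP] using natDegree_sum_C_mul_prod_erase_X_sub_C_le univ a b
  refine ⟨htop, degree_le_of_natDegree_le (natDegree_le_pred hdeg htop), hcoeff, ?_⟩
  simpa [powersetCard_one] using hcoeff 0 n.zero_le
end
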